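/- Let D > 1 be a squarefree integer with D ≡ 1 or 2 (mod 4) such that every element of the ideal class group of ℚ(√−D) has order dividing 2. Then the multiplicative group G_D(ℚ) = {a + b·√D·i ∈ ℂ : a, b ∈ ℚ, a² + Db² = 1} decomposes as {1, −1} × F, where F is free abelian on the set {ζ_p : p odd prime with (−D/p) = 1}: every element z ∈ G_D(ℚ) admits a unique representation z = u · ∏_p ζ_p^{e_p}, where u ∈ {1, −1}, the product runs over the odd primes p with Legendre symbol (−D/p) = 1, the exponents e_p are integers, and all but finitely many e_p are zero. -/

import Mathlib

/-!
Write `a + b√D i = α / c` with `α ∈ ℤ[√-D]` of norm `c²`, and let `β_p = x_p + y_p √-D`. If a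
prime `p ∣ c` divides both coordinates of `α`, divide it out. Otherwise `p` is odd, prime to `D`
and split (`-D ≡ (α.re / α.im)² mod p`), and `p²` divides `α β̄_p` or `α β_p`: the product of
their imaginary parts is `≡ 0 mod p²`, while their sum `2 α.im β_p.re` is prime to `p`. So
`α = γ β_p` or `α = γ β̄_p` with `N γ = (c/p)²`, and induction on `c` gives existence.

For uniqueness, a relation `∏ ζ_q ^ e_q = ±1` with `e_p ≠ 0` clears denominators to
`∏ ξ_q ^ |e_q| = ±∏ q ^ |e_q|` in `ℤ[√-D]`, with `ξ_q ∈ {β_q, β̄_q}`. Reducing modulo `p` along a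
square root of `-D` at which `ξ_p` does not vanish makes the left side nonzero (the other `ξ_q`
have norm `q²`, a unit mod `p`) and the right side zero.
-/

open Complex

namespace Zsqrtd

variable {d : ℤ}

def conjIfNeg (k : ℤ) (ξ : ℤ√d) : ℤ√d := if 0 ≤ k then ξ else star ξ

@[simp]
lemma norm_conjIfNeg (k : ℤ) (ξ : ℤ√d) : (conjIfNeg k ξ).norm = ξ.norm := by
  unfold conjIfNeg; split_ifs <;> simp [norm_conj]

@[simp]
lemma re_conjIfNeg (k : ℤ) (ξ : ℤ√d) : (conjIfNeg k ξ).re = ξ.re := by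
  unfold conjIfNeg; split_ifs <;> simp

lemma map_ne_zero_of_intCast_norm_ne_zero {R : Type*} [CommRing R] (f : ℤ√d →+* R) {ξ : ℤ√d}
    (h : (ξ.norm : R) ≠ 0) : f ξ ≠ 0 := by
  intro hξ
  rw [← map_intCast f, norm_eq_mul_conj, map_mul, hξ, zero_mul] at h
  exact h rfl

lemma im_mul_star_mul_im_mul (α β : ℤ√d) :
    (α * star β).im * (α * β).im = α.im ^ 2 * β.norm - β.im ^ 2 * α.norm := by
  simp only [im_mul, im_star, mul_neg, re_star, norm_def]; ring

lemma im_mul_star_add_im_mul (α β : ℤ√d) :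
    (α * star β).im + (α * β).im = 2 * α.im * β.re := by
  simp only [im_mul, im_star, mul_neg, re_star]; ring

lemma re_mul_star_mul_im (α β : ℤ√d) :
    (α * star β).re * α.im = β.im * α.norm + α.re * (α * star β).im := by
  simp only [re_mul, re_star, im_star, mul_neg, norm_def, im_mul]; ring

section Descent

variable {p : ℤ} {α β : ℤ√d}

lemma sq_dvd_im_mul_star_or_im_mul (hp : Prime p) (hp2 : ¬ p ∣ 2) (hα : p ^ 2 ∣ α.norm)
    (hαim : ¬ p ∣ α.im) (hβ : β.norm = p ^ 2) (hβre : ¬ p ∣ β.re) :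
    p ^ 2 ∣ (α * star β).im ∨ p ^ 2 ∣ (α * β).im := by
  have hprod : p ^ 2 ∣ (α * star β).im * (α * β).im := by
    rw [im_mul_star_mul_im_mul, hβ]
    exact dvd_sub (dvd_mul_left _ _) (dvd_mul_of_dvd_right hα _)
  have hsum : ¬ p ∣ (α * star β).im + (α * β).im := by
    rw [im_mul_star_add_im_mul]
    intro h
    rcases hp.dvd_or_dvd h with h | h
    · rcases hp.dvd_or_dvd h with h | h
      exacts [hp2 h, hαim h]
    · exact hβre h
  by_cases h : p ∣ (α * star β).im
  · have hcop : IsCoprime (p ^ 2) (α * β).im :=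
      ((hp.coprime_iff_not_dvd).mpr fun h' => hsum (dvd_add h h')).pow_left
    exact Or.inl (hcop.dvd_of_dvd_mul_right hprod)
  · exact Or.inr (((hp.coprime_iff_not_dvd).mpr h).pow_left.dvd_of_dvd_mul_left hprod)

lemma sq_dvd_re_mul_star (hp : Prime p) (hα : p ^ 2 ∣ α.norm) (hαim : ¬ p ∣ α.im)
    (h : p ^ 2 ∣ (α * star β).im) : p ^ 2 ∣ (α * star β).re := by
  have hcop : IsCoprime (p ^ 2) α.im := ((hp.coprime_iff_not_dvd).mpr hαim).pow_left
  refine hcop.dvd_of_dvd_mul_right ?_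
  rw [re_mul_star_mul_im]
  exact dvd_add (dvd_mul_of_dvd_right hα _) (dvd_mul_of_dvd_right h _)

lemma exists_eq_mul_of_sq_dvd (hp : p ≠ 0) (hβ : β.norm = p ^ 2)
    (hre : p ^ 2 ∣ (α * star β).re) (him : p ^ 2 ∣ (α * star β).im) : ∃ γ, α = γ * β := by
  obtain ⟨γ, hγ⟩ := (intCast_dvd (p ^ 2) (α * star β)).mpr ⟨hre, him⟩
  refine ⟨γ, Zsqrtd.eq_of_smul_eq_smul_left (pow_ne_zero 2 hp) ?_⟩
  calc ((p ^ 2 : ℤ) : ℤ√d) * α = α * star β * β := by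
        rw [← hβ, norm_eq_mul_conj]; ring
    _ = _ := by rw [hγ]; ring

lemma exists_eq_mul_conjIfNeg (hp : Prime p) (hp2 : ¬ p ∣ 2) (hα : p ^ 2 ∣ α.norm)
    (hαim : ¬ p ∣ α.im) (hβ : β.norm = p ^ 2) (hβre : ¬ p ∣ β.re) :
    ∃ γ : ℤ√d, ∃ k : ℤ, (k = 1 ∨ k = -1) ∧ α = γ * conjIfNeg k β := by
  rcases sq_dvd_im_mul_star_or_im_mul hp hp2 hα hαim hβ hβre with h | h
  · obtain ⟨γ, hγ⟩ :=
      exists_eq_mul_of_sq_dvd hp.ne_zero hβ (sq_dvd_re_mul_star hp hα hαim h) h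
    exact ⟨γ, 1, Or.inl rfl, by simpa [conjIfNeg] using hγ⟩
  · rw [← star_star β] at h
    obtain ⟨γ, hγ⟩ := exists_eq_mul_of_sq_dvd hp.ne_zero (by rwa [norm_conj])
      (sq_dvd_re_mul_star hp hα hαim h) h
    exact ⟨γ, -1, Or.inr rfl, by simpa [conjIfNeg] using hγ⟩

end Descent

lemma exists_lift_ne_zero {p : ℕ} [Fact p.Prime] (hp2 : p ≠ 2) {ξ : ℤ√d}
    (hξ : (p : ℤ) ∣ ξ.norm) (hre : ¬ (p : ℤ) ∣ ξ.re) :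
    ∃ r : {r : ZMod p // r * r = d}, lift r ξ ≠ 0 := by
  have hX : (ξ.re : ZMod p) ≠ 0 := by rwa [Ne, ZMod.intCast_zmod_eq_zero_iff_dvd]
  have hN : (ξ.re : ZMod p) * ξ.re - d * ξ.im * ξ.im = 0 := by
    rw [← ZMod.intCast_zmod_eq_zero_iff_dvd, norm_def] at hξ
    exact_mod_cast hξ
  have hY : (ξ.im : ZMod p) ≠ 0 := fun hY => hX (mul_self_eq_zero.mp (by simpa [hY] using hN))
  have h2 : (2 : ZMod p) ≠ 0 := by
    intro h
    have : p ∣ 2 := (ZMod.natCast_eq_zero_iff 2 p).mp (by exact_mod_cast h)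
    exact hp2 ((Nat.prime_dvd_prime_iff_eq Fact.out Nat.prime_two).mp this)
  -- `√d ↦ re / im` sends `ξ` to `2 re`.
  refine ⟨⟨ξ.re / ξ.im, by field_simp; linear_combination hN⟩, ?_⟩
  simp only [lift_apply_apply]
  rw [mul_div_cancel₀ _ hY, ← two_mul]
  exact mul_ne_zero h2 hX

noncomputable def toComplex (D : ℕ) : ℤ√(-(D : ℤ)) →+* ℂ :=
  lift ⟨Real.sqrt D * I, by
    rw [mul_mul_mul_comm, ← ofReal_mul, Real.mul_self_sqrt (Nat.cast_nonneg D), I_mul_I]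
    push_cast; ring⟩

lemma toComplex_apply (D : ℕ) (α : ℤ√(-(D : ℤ))) :
    toComplex D α = α.re + α.im * (Real.sqrt D * I) := by
  simp [toComplex]

lemma toComplex_injective {D : ℕ} (hD : 0 < D) : Function.Injective (toComplex D) :=
  lift_injective _ fun n hn => by nlinarith [mul_self_nonneg n]

lemma toComplex_mul_star (D : ℕ) (α : ℤ√(-(D : ℤ))) :
    toComplex D α * toComplex D (star α) = α.norm := by
  rw [← map_mul, ← norm_eq_mul_conj, map_intCast]

lemma norm_eq_sq_add_mul_sq {D : ℕ} (α : ℤ√(-(D : ℤ))) : α.norm = α.re ^ 2 + D * α.im ^ 2 := by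
  rw [norm_def]; ring

lemma eq_one_or_eq_neg_one_of_norm_eq_one {D : ℕ} (hD : 1 < D) {α : ℤ√(-(D : ℤ))}
    (h : α.norm = 1) : α = 1 ∨ α = -1 := by
  rw [norm_eq_sq_add_mul_sq] at h
  have him : α.im = 0 := by
    have : (2 : ℤ) ≤ D := by exact_mod_cast hD
    nlinarith [sq_nonneg α.re, sq_nonneg α.im]
  have hre : α.re * α.re = 1 := by rw [him] at h; linear_combination h
  rcases mul_self_eq_one_iff.mp hre with h | h
  · exact Or.inl (Zsqrtd.ext h him)
  · exact Or.inr (Zsqrtd.ext h (by simp [him]))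

end Zsqrtd

open Zsqrtd

section PrimeDivisors

variable {D m n c p : ℤ}

lemma not_dvd_right_of_sq_add_mul_sq_eq_sq (hp : Prime p) (h : m ^ 2 + D * n ^ 2 = c ^ 2)
    (hpc : p ∣ c) (hprim : ¬ (p ∣ m ∧ p ∣ n)) : ¬ p ∣ n := by
  refine fun hpn => hprim ⟨hp.dvd_of_dvd_pow (n := 2) ?_, hpn⟩
  rw [show m ^ 2 = c ^ 2 - D * n ^ 2 by linear_combination h]
  exact dvd_sub (dvd_pow hpc two_ne_zero) (dvd_mul_of_dvd_right (dvd_pow hpn two_ne_zero) _)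

lemma not_dvd_left_of_sq_add_mul_sq_eq_sq (hp : Prime p) (h : m ^ 2 + D * n ^ 2 = c ^ 2)
    (hpc : p ∣ c) (hprim : ¬ (p ∣ m ∧ p ∣ n)) (hpD : ¬ p ∣ D) : ¬ p ∣ m := by
  refine fun hpm => hprim ⟨hpm, ?_⟩
  have : p ∣ D * n ^ 2 := by
    rw [show D * n ^ 2 = c ^ 2 - m ^ 2 by linear_combination h]
    exact dvd_sub (dvd_pow hpc two_ne_zero) (dvd_pow hpm two_ne_zero)
  exact hp.dvd_of_dvd_pow ((hp.dvd_or_dvd this).resolve_left hpD)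

lemma not_dvd_coeff_of_sq_add_mul_sq_eq_sq (hsf : Squarefree D) (hp : Prime p)
    (h : m ^ 2 + D * n ^ 2 = c ^ 2) (hpc : p ∣ c) (hprim : ¬ (p ∣ m ∧ p ∣ n)) : ¬ p ∣ D := by
  intro hpD
  have hpm : p ∣ m := by
    refine hp.dvd_of_dvd_pow (n := 2) ?_
    rw [show m ^ 2 = c ^ 2 - D * n ^ 2 by linear_combination h]
    exact dvd_sub (dvd_pow hpc two_ne_zero) (dvd_mul_of_dvd_left hpD _)
  have hsq : p ^ 2 ∣ D * n ^ 2 := by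
    rw [show D * n ^ 2 = c ^ 2 - m ^ 2 by linear_combination h]
    exact dvd_sub (pow_dvd_pow_of_dvd hpc 2) (pow_dvd_pow_of_dvd hpm 2)
  have hcop : IsCoprime (p ^ 2) (n ^ 2) :=
    ((hp.coprime_iff_not_dvd).mpr fun hpn => hprim ⟨hpm, hpn⟩).pow
  exact hp.not_isUnit (hsf p (by simpa [sq] using hcop.dvd_of_dvd_mul_right hsq))

lemma odd_of_sq_add_mul_sq_eq_sq (hD : D % 4 = 1 ∨ D % 4 = 2) (hm : Odd m) (hn : Odd n)
    (h : m ^ 2 + D * n ^ 2 = c ^ 2) : Odd c := by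
  obtain ⟨k, rfl⟩ := hm
  obtain ⟨l, rfl⟩ := hn
  by_contra hc
  obtain ⟨j, rfl⟩ := Int.not_odd_iff_even.mp hc
  have : 4 ∣ D + 1 := ⟨j ^ 2 - k ^ 2 - k - D * (l ^ 2 + l), by linear_combination h⟩
  omega

lemma legendreSym_neg_eq_one_of_sq_add_mul_sq_eq_sq {p : ℕ} [Fact p.Prime]
    (h : m ^ 2 + D * n ^ 2 = c ^ 2) (hpc : (p : ℤ) ∣ c)
    (hprim : ¬ ((p : ℤ) ∣ m ∧ (p : ℤ) ∣ n)) (hpD : ¬ (p : ℤ) ∣ D) : legendreSym p (-D) = 1 := by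
  have h0 : ((-D : ℤ) : ZMod p) ≠ 0 := by rwa [Ne, ZMod.intCast_zmod_eq_zero_iff_dvd, dvd_neg]
  refine (legendreSym.eq_one_or_neg_one p h0).resolve_right fun h1 =>
    hprim (legendreSym.prime_dvd_of_eq_neg_one h1 ?_)
  rw [show m ^ 2 - -D * n ^ 2 = c ^ 2 by linear_combination h]
  exact dvd_pow hpc two_ne_zero

end PrimeDivisors

def IsSplitPrime (D p : ℕ) : Prop := ∃ hp : p.Prime, p ≠ 2 ∧ @legendreSym p ⟨hp⟩ (-(D : ℤ)) = 1

lemma isSplitPrime_of_dvd {D p : ℕ} (hsf : Squarefree D) (hDmod : D % 4 = 1 ∨ D % 4 = 2)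
    (hp : p.Prime) {m n c : ℤ} (h : m ^ 2 + D * n ^ 2 = c ^ 2) (hpc : (p : ℤ) ∣ c)
    (hprim : ¬ ((p : ℤ) ∣ m ∧ (p : ℤ) ∣ n)) : IsSplitPrime D p := by
  have hpZ := Nat.prime_iff_prime_int.mp hp
  have hpD :=
    not_dvd_coeff_of_sq_add_mul_sq_eq_sq (Int.squarefree_natCast.mpr hsf) hpZ h hpc hprim
  have := Fact.mk hp
  refine ⟨hp, ?_, legendreSym_neg_eq_one_of_sq_add_mul_sq_eq_sq h hpc hprim hpD⟩
  rintro rfl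
  have hm := not_dvd_left_of_sq_add_mul_sq_eq_sq hpZ h hpc hprim hpD
  have hn := not_dvd_right_of_sq_add_mul_sq_eq_sq hpZ h hpc hprim
  rw [Nat.cast_two, ← even_iff_two_dvd, Int.not_even_iff_odd] at hm hn
  rw [Nat.cast_two, ← even_iff_two_dvd] at hpc
  exact Int.not_even_iff_odd.mpr (odd_of_sq_add_mul_sq_eq_sq (by omega) hm hn h) hpc

/-- For a split prime `q = 𝔮 𝔮'`, `β q` is a generator of `𝔮 ^ 2` or of `𝔮' ^ 2`. -/
def IsSplitPrimeFamily (D : ℕ) (β : ℕ → ℤ√(-(D : ℤ))) : Prop :=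
  ∀ q, IsSplitPrime D q → (β q).norm = q ^ 2 ∧ ¬ (q : ℤ) ∣ (β q).re

lemma isSplitPrimeFamily_of_sq_add_mul_sq {D : ℕ} {x y : ℕ → ℕ}
    (hxy : ∀ p, IsSplitPrime D p →
      x p ^ 2 + D * y p ^ 2 = p ^ 2 ∧ Nat.gcd (Nat.gcd (x p) (y p)) p = 1) :
    IsSplitPrimeFamily D (fun p => ⟨x p, y p⟩) := by
  intro p hsplit
  obtain ⟨hnorm, hgcd⟩ := hxy p hsplit
  obtain ⟨hp, -, hleg⟩ := hsplit
  have hnormZ : (x p : ℤ) ^ 2 + D * (y p : ℤ) ^ 2 = (p : ℤ) ^ 2 := by exact_mod_cast hnorm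
  have hpD : ¬ (p : ℤ) ∣ D := by
    have := Fact.mk hp
    intro hpD
    have h0 := (legendreSym.eq_zero_iff p (-(D : ℤ))).mpr
      ((ZMod.intCast_zmod_eq_zero_iff_dvd _ p).mpr (dvd_neg.mpr hpD))
    rw [h0] at hleg
    exact zero_ne_one hleg
  have hprim : ¬ ((p : ℤ) ∣ x p ∧ (p : ℤ) ∣ y p) := by
    rintro ⟨hx, hy⟩
    have := Nat.dvd_gcd (Nat.dvd_gcd (Int.natCast_dvd_natCast.mp hx)
      (Int.natCast_dvd_natCast.mp hy)) (dvd_refl p)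
    exact hp.one_lt.ne' (Nat.dvd_one.mp (hgcd ▸ this))
  refine ⟨by rw [norm_eq_sq_add_mul_sq]; exact hnormZ, ?_⟩
  exact not_dvd_left_of_sq_add_mul_sq_eq_sq (Nat.prime_iff_prime_int.mp hp) hnormZ
    (dvd_refl _) hprim hpD

noncomputable def zeta {D : ℕ} (β : ℕ → ℤ√(-(D : ℤ))) (q : ℕ) : ℂ := toComplex D (β q) / q

noncomputable def zetaPow {D : ℕ} (β : ℕ → ℤ√(-(D : ℤ))) (e : ℕ →₀ ℤ) : ℂ :=
  e.prod fun q k => zeta β q ^ k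

section Zeta

variable {D : ℕ} {β : ℕ → ℤ√(-(D : ℤ))} {q : ℕ}

lemma zeta_mul_toComplex_star (hq : (β q).norm = q ^ 2) (hq0 : q ≠ 0) :
    zeta β q * (toComplex D (star (β q)) / q) = 1 := by
  rw [zeta, div_mul_div_comm, toComplex_mul_star, hq]
  field_simp
  push_cast
  ring

lemma zeta_zpow (hq : (β q).norm = q ^ 2) (hq0 : q ≠ 0) (k : ℤ) :
    zeta β q ^ k = toComplex D (conjIfNeg k (β q)) ^ k.natAbs / q ^ k.natAbs := by
  rcases le_or_gt 0 k with hk | hk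
  · obtain ⟨n, rfl⟩ := Int.eq_ofNat_of_zero_le hk
    simp [conjIfNeg, zeta, div_pow]
  · obtain ⟨n, rfl⟩ := Int.exists_eq_neg_ofNat hk.le
    rw [zpow_neg, zpow_natCast, ← inv_pow,
      inv_eq_of_mul_eq_one_right (zeta_mul_toComplex_star hq hq0), div_pow]
    have hn : n ≠ 0 := by omega
    simp [conjIfNeg, hn]

lemma zeta_ne_zero (hβ : IsSplitPrimeFamily D β) (hq : IsSplitPrime D q) : zeta β q ≠ 0 :=
  left_ne_zero_of_mul_eq_one (zeta_mul_toComplex_star (hβ q hq).1 hq.1.ne_zero)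

lemma toComplex_conjIfNeg (hβ : IsSplitPrimeFamily D β) (hq : IsSplitPrime D q) {k : ℤ}
    (hk : k = 1 ∨ k = -1) : toComplex D (conjIfNeg k (β q)) = q * zeta β q ^ k := by
  have hq0 : (q : ℂ) ≠ 0 := by exact_mod_cast hq.1.ne_zero
  have hk1 : k.natAbs = 1 := by omega
  rw [zeta_zpow (hβ q hq).1 hq.1.ne_zero, hk1, pow_one, pow_one, mul_div_cancel₀ _ hq0]

lemma zetaPow_zero : zetaPow β 0 = 1 := Finsupp.prod_zero_index

lemma zetaPow_single (k : ℤ) : zetaPow β (Finsupp.single q k) = zeta β q ^ k :=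
  Finsupp.prod_single_index (zpow_zero _)

lemma zetaPow_add (hβ : IsSplitPrimeFamily D β) {e₁ e₂ : ℕ →₀ ℤ}
    (h₁ : ∀ q ∈ e₁.support, IsSplitPrime D q) (h₂ : ∀ q ∈ e₂.support, IsSplitPrime D q) :
    zetaPow β (e₁ + e₂) = zetaPow β e₁ * zetaPow β e₂ :=
  Finsupp.prod_add_index (fun _ _ => zpow_zero _) fun q hq k₁ k₂ =>
    zpow_add₀ (zeta_ne_zero hβ ((Finset.mem_union.mp hq).elim (h₁ q) (h₂ q))) k₁ k₂

lemma zetaPow_ne_zero (hβ : IsSplitPrimeFamily D β) {e : ℕ →₀ ℤ}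
    (he : ∀ q ∈ e.support, IsSplitPrime D q) : zetaPow β e ≠ 0 :=
  Finset.prod_ne_zero_iff.mpr fun q hq => zpow_ne_zero _ (zeta_ne_zero hβ (he q hq))

lemma zetaPow_eq_div (hβ : IsSplitPrimeFamily D β) {e : ℕ →₀ ℤ}
    (he : ∀ q ∈ e.support, IsSplitPrime D q) :
    zetaPow β e = toComplex D (∏ q ∈ e.support, conjIfNeg (e q) (β q) ^ (e q).natAbs) /
      ((∏ q ∈ e.support, (q : ℤ) ^ (e q).natAbs : ℤ) : ℂ) := by
  rw [zetaPow, Finsupp.prod, Finset.prod_congr rfl fun q hq =>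
    zeta_zpow (hβ q (he q hq)).1 (he q hq).1.ne_zero (e q), Finset.prod_div_distrib, map_prod]
  push_cast
  simp_rw [map_pow]

end Zeta

lemma exists_norm_eq_sq_of_sq_add_mul_sq_eq_one {D : ℕ} {a b : ℚ} (h : a ^ 2 + D * b ^ 2 = 1) :
    ∃ α : ℤ√(-(D : ℤ)), ∃ c : ℕ, c ≠ 0 ∧ α.norm = c ^ 2 ∧
      (a : ℂ) + b * Real.sqrt D * I = toComplex D α / c := by
  set c := a.den * b.den
  have hc : c ≠ 0 := by positivity
  set α : ℤ√(-(D : ℤ)) := ⟨a.num * b.den, b.num * a.den⟩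
  have hre : (α.re : ℚ) = a * c := by
    simp only [α, c]; push_cast; rw [← Rat.mul_den_eq_num]; ring
  have him : (α.im : ℚ) = b * c := by
    simp only [α, c]; push_cast; rw [← Rat.mul_den_eq_num]; ring
  refine ⟨α, c, hc, Int.cast_injective (α := ℚ) ?_, ?_⟩
  · rw [norm_eq_sq_add_mul_sq]
    push_cast
    rw [hre, him]
    linear_combination (c : ℚ) ^ 2 * h
  · have hreC : (α.re : ℂ) = a * c := by exact_mod_cast congrArg ((↑) : ℚ → ℂ) hre
    have himC : (α.im : ℂ) = b * c := by exact_mod_cast congrArg ((↑) : ℚ → ℂ) him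
    rw [toComplex_apply, hreC, himC, eq_div_iff (by exact_mod_cast hc)]
    ring

section Existence

variable {D : ℕ} {β : ℕ → ℤ√(-(D : ℤ))}

lemma exists_descent (hsf : Squarefree D) (hDmod : D % 4 = 1 ∨ D % 4 = 2)
    (hβ : IsSplitPrimeFamily D β) {p c : ℕ} (hp : p.Prime) {α : ℤ√(-(D : ℤ))}
    (hα : α.norm = ((p * c : ℕ) : ℤ) ^ 2) :
    ∃ γ : ℤ√(-(D : ℤ)), γ.norm = c ^ 2 ∧ (α = p * γ ∨
      IsSplitPrime D p ∧ ∃ k : ℤ, (k = 1 ∨ k = -1) ∧ α = γ * conjIfNeg k (β p)) := by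
  have hpZ := Nat.prime_iff_prime_int.mp hp
  have hp0 : (p : ℤ) ^ 2 ≠ 0 := pow_ne_zero 2 hpZ.ne_zero
  push_cast at hα
  by_cases hdvd : (p : ℤ) ∣ α.re ∧ (p : ℤ) ∣ α.im
  · obtain ⟨γ, rfl⟩ := (intCast_dvd _ _).mpr hdvd
    rw [Zsqrtd.norm_mul, Zsqrtd.norm_intCast] at hα
    exact ⟨γ, mul_left_cancel₀ hp0 (by linear_combination hα), Or.inl rfl⟩
  have hαN : α.re ^ 2 + D * α.im ^ 2 = (p * c : ℤ) ^ 2 := by rw [← norm_eq_sq_add_mul_sq, hα]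
  have hpc : (p : ℤ) ∣ p * c := dvd_mul_right _ _
  have hsplit := isSplitPrime_of_dvd hsf hDmod hp hαN hpc hdvd
  obtain ⟨hβN, hβre⟩ := hβ p hsplit
  have hp2 : ¬ (p : ℤ) ∣ 2 := fun h => hsplit.2.1
    ((Nat.prime_dvd_prime_iff_eq hp Nat.prime_two).mp (by exact_mod_cast h))
  obtain ⟨γ, k, hk, rfl⟩ := exists_eq_mul_conjIfNeg hpZ hp2 (hα ▸ ⟨c ^ 2, by ring⟩)
    (not_dvd_right_of_sq_add_mul_sq_eq_sq hpZ hαN hpc hdvd) hβN hβre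
  rw [Zsqrtd.norm_mul, norm_conjIfNeg, hβN] at hα
  exact ⟨γ, mul_right_cancel₀ hp0 (by linear_combination hα), Or.inr ⟨hsplit, k, hk, rfl⟩⟩

theorem exists_toComplex_eq_mul_sign_mul_zetaPow (hD : 1 < D) (hsf : Squarefree D)
    (hDmod : D % 4 = 1 ∨ D % 4 = 2) (hβ : IsSplitPrimeFamily D β) {c : ℕ} (hc : c ≠ 0)
    {α : ℤ√(-(D : ℤ))} (hα : α.norm = c ^ 2) :
    ∃ u : ℂ, ∃ e : ℕ →₀ ℤ, (u = 1 ∨ u = -1) ∧ (∀ q ∈ e.support, IsSplitPrime D q) ∧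
      toComplex D α = c * (u * zetaPow β e) := by
  induction c using Nat.strong_induction_on generalizing α with
  | _ c ih =>
  rcases eq_or_ne c 1 with rfl | hc1
  · rcases eq_one_or_eq_neg_one_of_norm_eq_one hD (by simpa using hα) with rfl | rfl
    · exact ⟨1, 0, Or.inl rfl, by simp, by simp [zetaPow_zero]⟩
    · exact ⟨-1, 0, Or.inr rfl, by simp, by simp [zetaPow_zero]⟩
  have hp := Nat.minFac_prime hc1
  obtain ⟨c', hcc'⟩ := Nat.minFac_dvd c
  have hc' : c' ≠ 0 := by rintro rfl; exact hc (by simpa using hcc')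
  have hlt : c' < c := hcc' ▸ lt_mul_left (Nat.pos_of_ne_zero hc') hp.one_lt
  rw [hcc'] at hα ⊢
  obtain ⟨γ, hγ, h⟩ := exists_descent hsf hDmod hβ hp hα
  obtain ⟨u, e, hu, he, hγe⟩ := ih c' hlt hc' hγ
  rcases h with rfl | ⟨hsplit, k, hk, rfl⟩
  · exact ⟨u, e, hu, he, by rw [map_mul, map_natCast, hγe]; push_cast; ring⟩
  · have hsingle : ∀ q ∈ (Finsupp.single c.minFac k).support, IsSplitPrime D q :=
      fun q hq => (Finset.mem_singleton.mp (Finsupp.support_single_subset hq)) ▸ hsplit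
    refine ⟨u, e + Finsupp.single c.minFac k, hu, ?_, ?_⟩
    · exact fun q hq => (Finset.mem_union.mp (Finsupp.support_add hq)).elim (he q) (hsingle q)
    · rw [zetaPow_add hβ he hsingle, zetaPow_single, map_mul, hγe,
        toComplex_conjIfNeg hβ hsplit hk]
      push_cast
      ring

end Existence

section Uniqueness

variable {D : ℕ} {β : ℕ → ℤ√(-(D : ℤ))}

theorem eq_zero_of_zetaPow_eq_one_or_neg_one (hD : 0 < D) (hβ : IsSplitPrimeFamily D β)
    {g : ℕ →₀ ℤ} (hg : ∀ q ∈ g.support, IsSplitPrime D q)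
    (h : zetaPow β g = 1 ∨ zetaPow β g = -1) : g = 0 := by
  by_contra hg0
  obtain ⟨p, hp⟩ := Finsupp.support_nonempty_iff.mpr hg0
  obtain ⟨hpp, hp2, -⟩ := hg p hp
  have := Fact.mk hpp
  set P := ∏ q ∈ g.support, conjIfNeg (g q) (β q) ^ (g q).natAbs
  set C : ℤ := ∏ q ∈ g.support, (q : ℤ) ^ (g q).natAbs
  have hC : (C : ℂ) ≠ 0 := Int.cast_ne_zero.mpr <| Finset.prod_ne_zero_iff.mpr fun q hq =>
    pow_ne_zero _ (by exact_mod_cast (hg q hq).1.ne_zero)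
  have hPC : P = C ∨ P = -C := by
    rw [zetaPow_eq_div hβ hg, div_eq_iff hC, div_eq_iff hC] at h
    exact h.imp (fun h => toComplex_injective hD (h.trans (by simp)))
      (fun h => toComplex_injective hD (h.trans (by simp)))
  obtain ⟨hβN, hβre⟩ := hβ p (hg p hp)
  obtain ⟨r, hr⟩ := exists_lift_ne_zero hp2 (ξ := conjIfNeg (g p) (β p))
    (by simp [hβN, sq]) (by simpa using hβre)
  have hP : lift r P ≠ 0 := by
    rw [map_prod]
    refine Finset.prod_ne_zero_iff.mpr fun q hq => ?_
    rw [map_pow]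
    refine pow_ne_zero _ ?_
    rcases eq_or_ne q p with rfl | hqp
    · exact hr
    · refine map_ne_zero_of_intCast_norm_ne_zero _ ?_
      rw [norm_conjIfNeg, (hβ q (hg q hq)).1]
      push_cast
      refine pow_ne_zero 2 fun hq0 => hqp ?_
      exact ((Nat.prime_dvd_prime_iff_eq hpp (hg q hq).1).mp
        ((ZMod.natCast_eq_zero_iff q p).mp hq0)).symm
  have hCp : (C : ZMod p) = 0 := by
    rw [ZMod.intCast_zmod_eq_zero_iff_dvd]
    exact (dvd_pow_self _ (Int.natAbs_ne_zero.mpr (Finsupp.mem_support_iff.mp hp))).trans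
      (Finset.dvd_prod_of_mem _ hp)
  rcases hPC with h | h <;> simp [h, hCp] at hP

theorem eq_of_sign_mul_zetaPow_eq (hD : 0 < D) (hβ : IsSplitPrimeFamily D β) {u₁ u₂ : ℂ}
    {e₁ e₂ : ℕ →₀ ℤ} (hu₁ : u₁ = 1 ∨ u₁ = -1) (hu₂ : u₂ = 1 ∨ u₂ = -1)
    (he₁ : ∀ q ∈ e₁.support, IsSplitPrime D q) (he₂ : ∀ q ∈ e₂.support, IsSplitPrime D q)
    (h : u₁ * zetaPow β e₁ = u₂ * zetaPow β e₂) : u₁ = u₂ ∧ e₁ = e₂ := by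
  have hsub : ∀ q ∈ (e₁ - e₂).support, IsSplitPrime D q := fun q hq =>
    (Finset.mem_union.mp (Finsupp.support_sub hq)).elim (he₁ q) (he₂ q)
  have hg : u₁ * zetaPow β (e₁ - e₂) = u₂ := by
    refine mul_right_cancel₀ (zetaPow_ne_zero hβ he₂) ?_
    rw [mul_assoc, ← zetaPow_add hβ hsub he₂, sub_add_cancel, h]
  have hE : zetaPow β (e₁ - e₂) = u₁ * u₂ := by
    rw [← hg, ← mul_assoc, show u₁ * u₁ = 1 by rcases hu₁ with rfl | rfl <;> norm_num, one_mul]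
  have h0 := eq_zero_of_zetaPow_eq_one_or_neg_one hD hβ hsub
    (by rw [hE]; rcases hu₁ with rfl | rfl <;> rcases hu₂ with rfl | rfl <;> norm_num)
  rw [h0, zetaPow_zero, mul_one] at hg
  exact ⟨hg, sub_eq_zero.mp h0⟩

end Uniqueness

theorem G_D_decomposition_general
    (D : ℕ) (hD : 1 < D) (hsf : Squarefree D) (hDmod : D % 4 = 1 ∨ D % 4 = 2)
    (x y : ℕ → ℕ)
    (hxy : ∀ p : ℕ, (hp : p.Prime) → p ≠ 2 → @legendreSym p ⟨hp⟩ (-(D : ℤ)) = 1 →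
        0 < x p ∧ 0 < y p ∧ (x p) ^ 2 + D * (y p) ^ 2 = p ^ 2 ∧
          Nat.gcd (Nat.gcd (x p) (y p)) p = 1)
    (a b : ℚ) (h : a ^ 2 + (D : ℚ) * b ^ 2 = 1) :
    ∃! ue : ℂ × (ℕ →₀ ℤ),
      (ue.1 = 1 ∨ ue.1 = -1) ∧
      (∀ p ∈ ue.2.support, ∃ hp : p.Prime, p ≠ 2 ∧ @legendreSym p ⟨hp⟩ (-(D : ℤ)) = 1) ∧
      (a : ℂ) + (b : ℂ) * (Real.sqrt D : ℂ) * Complex.I =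
        ue.1 * ∏ p ∈ ue.2.support,
          (((x p : ℂ) + (y p : ℂ) * (Real.sqrt D : ℂ) * Complex.I) / (p : ℂ)) ^ (ue.2 p) := by
  set β : ℕ → ℤ√(-(D : ℤ)) := fun p => ⟨x p, y p⟩
  have hβ : IsSplitPrimeFamily D β := isSplitPrimeFamily_of_sq_add_mul_sq
    fun p ⟨hp, hp2, hleg⟩ => (hxy p hp hp2 hleg).2.2
  have hζ : ∀ e : ℕ →₀ ℤ, ∏ p ∈ e.support,
      (((x p : ℂ) + (y p : ℂ) * (Real.sqrt D : ℂ) * Complex.I) / (p : ℂ)) ^ (e p) =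
        zetaPow β e :=
    fun e => Finset.prod_congr rfl fun p _ => by simp [zeta, β, toComplex_apply, mul_assoc]
  simp only [hζ]
  obtain ⟨α, c, hc, hα, hz⟩ := exists_norm_eq_sq_of_sq_add_mul_sq_eq_one h
  obtain ⟨u, e, hu, he, hαe⟩ :=
    exists_toComplex_eq_mul_sign_mul_zetaPow hD hsf hDmod hβ hc hα
  have hrep : (a : ℂ) + b * Real.sqrt D * I = u * zetaPow β e := by
    rw [hz, hαe, mul_div_cancel_left₀ _ (by exact_mod_cast hc)]
  refine ⟨(u, e), ⟨hu, he, hrep⟩, fun ⟨u', e'⟩ ⟨hu', he', h'⟩ => ?_⟩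
  obtain ⟨rfl, rfl⟩ := eq_of_sign_mul_zetaPow_eq (by omega) hβ hu' hu he' he (h'.symm.trans hrep)
  rfl

/-- **Group structure theorem of [JMMM]: `G_D(ℚ) = {±1} × F` with `F` free abelian on the
`ζ_p`.**
Let `D > 1` be a squarefree integer with `D ≡ 1` or `2 (mod 4)` such that every element of the
ideal class group of `ℚ(√-D)` (equivalently, of `ℤ[√-D]`) has order dividing 2.  For each odd
prime `p` with Legendre symbol `(-D/p) = 1`, let `(x p, y p)` be the (unique) pair of positive
integers with `(x p)² + D (y p)² = p²` and `gcd(x p, y p, p) = 1`, and put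
`ζ_p = (x p + y p · √D · i)/p ∈ ℂ`.  Then every element `a + b √D i` of
`G_D(ℚ) = {a + b √D i : a, b ∈ ℚ, a² + D b² = 1}` has a unique representation
`u · ∏_p ζ_p ^ (e p)` with `u ∈ {1, -1}` and `e` a finitely supported family of integer
exponents indexed by the odd primes `p` with `(-D/p) = 1`. -/
theorem G_D_decomposition
    (D : ℕ) (hD : 1 < D) (hsf : Squarefree D) (hDmod : D % 4 = 1 ∨ D % 4 = 2)
    [IsDomain (ℤ√(-(D : ℤ)))]
    (hclass : ∀ x : ClassGroup (ℤ√(-(D : ℤ))), x ^ 2 = 1)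
    (x y : ℕ → ℕ)
    (hxy : ∀ p : ℕ, (hp : p.Prime) → p ≠ 2 → @legendreSym p ⟨hp⟩ (-(D : ℤ)) = 1 →
        0 < x p ∧ 0 < y p ∧ (x p) ^ 2 + D * (y p) ^ 2 = p ^ 2 ∧
          Nat.gcd (Nat.gcd (x p) (y p)) p = 1)
    (a b : ℚ) (h : a ^ 2 + (D : ℚ) * b ^ 2 = 1) :
    ∃! ue : ℂ × (ℕ →₀ ℤ),
      (ue.1 = 1 ∨ ue.1 = -1) ∧
      (∀ p ∈ ue.2.support, ∃ hp : p.Prime, p ≠ 2 ∧ @legendreSym p ⟨hp⟩ (-(D : ℤ)) = 1) ∧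
      (a : ℂ) + (b : ℂ) * (Real.sqrt D : ℂ) * Complex.I =
        ue.1 * ∏ p ∈ ue.2.support,
          (((x p : ℂ) + (y p : ℂ) * (Real.sqrt D : ℂ) * Complex.I) / (p : ℂ)) ^ (ue.2 p) :=
  G_D_decomposition_general D hD hsf hDmod x y hxy a b h
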